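/- For every real y ≥ 0, π·erfc(−y)² − 2·e^{−y²}·√π·y·erfc(−y) − 2·e^{−2y²} ≥ π − 2, i.e., the function y ↦ π·erfc(−y)² − 2·e^{−y²}·√π·y·erfc(−y) − 2·e^{−2y²} is nondecreasing on [0,∞) with value π−2 at y = 0. -/

import Mathlib

/-! Since `(erfc (-y))' = (2/√π) e^{-y²}`, the function
`F y = π erfc(-y)² - 2√π y e^{-y²} erfc(-y) - 2e^{-2y²}` has derivative
`2√π (1 + 2y²) e^{-y²} erfc(-y) + 4y e^{-2y²}`, which is nonnegative for `y ≥ 0` because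
`erfc ≥ 0`. Hence `F` is nondecreasing on `[0, ∞)`, and `F 0 = π - 2` as `erfc 0 = 1`. -/

open Real MeasureTheory

/-- erfc(x) = (2/√π)·∫_x^∞ e^{−t²} dt -/
noncomputable def erfc (x : ℝ) : ℝ := (2 / Real.sqrt Real.pi) * ∫ t in Set.Ioi x, Real.exp (-t ^ 2)

lemma integrable_exp_neg_sq : Integrable (fun t : ℝ => exp (-t ^ 2)) := by
  simpa using integrable_exp_neg_mul_sq one_pos

lemma integral_Ioi_exp_neg_sq (x : ℝ) :
    ∫ t in Set.Ioi x, exp (-t ^ 2) = √π / 2 - ∫ t in (0 : ℝ)..x, exp (-t ^ 2) := by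
  have hI := integrable_exp_neg_sq
  have h0 := intervalIntegral.integral_Iic_add_Ioi (b := 0) hI.integrableOn hI.integrableOn
  have hx := intervalIntegral.integral_Iic_add_Ioi (b := x) hI.integrableOn hI.integrableOn
  have hsub := intervalIntegral.integral_Iic_sub_Iic (a := 0) (b := x)
    hI.integrableOn hI.integrableOn
  have hhalf : ∫ t in Set.Ioi (0 : ℝ), exp (-t ^ 2) = √π / 2 := by
    simpa using integral_gaussian_Ioi 1
  linarith

lemma erfc_eq_one_sub (x : ℝ) : erfc x = 1 - 2 / √π * ∫ t in (0 : ℝ)..x, exp (-t ^ 2) := by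
  have hpi : √π ≠ 0 := by positivity
  rw [erfc, integral_Ioi_exp_neg_sq]
  field_simp

lemma erfc_zero : erfc 0 = 1 := by
  simp [erfc_eq_one_sub]

lemma erfc_nonneg (x : ℝ) : 0 ≤ erfc x :=
  mul_nonneg (by positivity) (integral_nonneg fun t => (exp_pos _).le)

lemma hasDerivAt_erfc (x : ℝ) : HasDerivAt erfc (-(2 / √π * exp (-x ^ 2))) x := by
  have hc : Continuous fun t : ℝ => exp (-t ^ 2) := by fun_prop
  have hG := intervalIntegral.integral_hasDerivAt_right (a := 0) (b := x)
    (hc.intervalIntegrable _ _)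
    (hc.stronglyMeasurableAtFilter _ _) hc.continuousAt
  rw [funext erfc_eq_one_sub]
  simpa using (hG.const_mul (2 / √π)).const_sub 1

lemma hasDerivAt_erfc_neg (y : ℝ) :
    HasDerivAt (fun u => erfc (-u)) (2 / √π * exp (-y ^ 2)) y := by
  simpa [Function.comp_def] using (hasDerivAt_erfc (-y)).comp y (hasDerivAt_neg y)

lemma hasDerivAt_exp_neg_mul_sq (c y : ℝ) :
    HasDerivAt (fun u : ℝ => exp (-c * u ^ 2)) (-(2 * c * y) * exp (-c * y ^ 2)) y := by
  convert ((hasDerivAt_pow 2 y).const_mul (-c)).exp using 1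
  ring

noncomputable def erfcCombination (y : ℝ) : ℝ :=
  π * erfc (-y) ^ 2 - 2 * exp (-y ^ 2) * √π * y * erfc (-y) - 2 * exp (-2 * y ^ 2)

lemma erfcCombination_zero : erfcCombination 0 = π - 2 := by
  simp [erfcCombination, erfc_zero]

lemma hasDerivAt_erfcCombination (y : ℝ) :
    HasDerivAt erfcCombination
      (2 * √π * (1 + 2 * y ^ 2) * exp (-y ^ 2) * erfc (-y) + 4 * y * exp (-2 * y ^ 2)) y := by
  have hE := hasDerivAt_erfc_neg y
  have h1 := hasDerivAt_exp_neg_mul_sq 1 y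
  have h2 := hasDerivAt_exp_neg_mul_sq 2 y
  simp only [neg_one_mul, mul_one] at h1
  have hD := ((hE.fun_pow 2).const_mul π).fun_sub
    ((((h1.const_mul 2).mul_const √π).fun_mul (hasDerivAt_id' y)).fun_mul hE) |>.fun_sub
    (h2.const_mul 2)
  refine hD.congr_deriv ?_
  have hpi : √π ≠ 0 := by positivity
  have hsq : √π * √π = π := mul_self_sqrt pi_pos.le
  rw [show (-2 : ℝ) * y ^ 2 = -y ^ 2 + -y ^ 2 by ring, exp_add]
  field_simp
  linear_combination (-4 * erfc (-y)) * hsq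

lemma monotoneOn_erfcCombination : MonotoneOn erfcCombination (Set.Ici 0) := by
  refine monotoneOn_of_hasDerivWithinAt_nonneg (convex_Ici 0)
    (fun y _ => (hasDerivAt_erfcCombination y).continuousAt.continuousWithinAt)
    (fun y _ => (hasDerivAt_erfcCombination y).hasDerivWithinAt) fun y hy => ?_
  rw [interior_Ici, Set.mem_Ioi] at hy
  have := erfc_nonneg (-y)
  positivity

theorem stmt9 :
    (∀ y : ℝ, 0 ≤ y →
      Real.pi * (erfc (-y)) ^ 2 - 2 * Real.exp (-y ^ 2) * Real.sqrt Real.pi * y * erfc (-y)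
        - 2 * Real.exp (-2 * y ^ 2) ≥ Real.pi - 2) ∧
    MonotoneOn (fun y : ℝ =>
      Real.pi * (erfc (-y)) ^ 2 - 2 * Real.exp (-y ^ 2) * Real.sqrt Real.pi * y * erfc (-y)
        - 2 * Real.exp (-2 * y ^ 2)) (Set.Ici (0 : ℝ)) ∧
    Real.pi * (erfc (-(0:ℝ))) ^ 2 - 2 * Real.exp (-(0:ℝ) ^ 2) * Real.sqrt Real.pi * 0 * erfc (-(0:ℝ))
        - 2 * Real.exp (-2 * (0:ℝ) ^ 2) = Real.pi - 2 := by
  refine ⟨fun y hy => ?_, monotoneOn_erfcCombination, erfcCombination_zero⟩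
  have := monotoneOn_erfcCombination Set.self_mem_Ici hy hy
  rwa [erfcCombination_zero] at this
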